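/- Let q be a prime power and 1 ≤ m ≤ q − 1. Then the multiplicity of the eigenvalue q of the adjacency matrix of the Wenger graph W_m(q) is exactly 1, and likewise the multiplicity of the eigenvalue −q is exactly 1. -/

import Mathlib

open Finset

/-- Adjacency relation of the Wenger graph `W_m(q)`: a point `p = (p_1, …, p_{m+1})`
(0-indexed here) is adjacent to a line `l = (l_1, …, l_{m+1})` iff
`l_{i+1} + p_{i+1} = l_i * p_1` for `i = 1, …, m`. -/
def wengerAdj {F : Type*} [Field F] {m : ℕ} (p l : Fin (m + 1) → F) : Prop :=
  ∀ i : Fin m, l i.succ + p i.succ = l i.castSucc * p 0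

/-- The Wenger graph `W_m(q)` as a simple graph on `P ⊕ L`, where both `P` (points, `inl`)
and `L` (lines, `inr`) are copies of `F^{m+1}` for a finite field `F` with `q` elements. -/
def WengerGraph (F : Type*) [Field F] (m : ℕ) :
    SimpleGraph ((Fin (m + 1) → F) ⊕ (Fin (m + 1) → F)) where
  Adj x y :=
    match x, y with
    | Sum.inl p, Sum.inr l => wengerAdj p l
    | Sum.inr l, Sum.inl p => wengerAdj p l
    | _, _ => False
  symm := ⟨by rintro (p | l) (p' | l') h <;> exact h⟩
  loopless := ⟨by rintro (p | l) h <;> exact h⟩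

open scoped Classical in
/-- The (real) adjacency matrix of the Wenger graph `W_m(q)`. -/
noncomputable def wengerAdjMatrix (F : Type*) [Field F] (m : ℕ) :
    Matrix ((Fin (m + 1) → F) ⊕ (Fin (m + 1) → F)) ((Fin (m + 1) → F) ⊕ (Fin (m + 1) → F)) ℝ :=
  (WengerGraph F m).adjMatrix ℝ

/-!
`W_m(q)` is `q`-regular and bipartite. For a `d`-regular graph the `d`-eigenspace of the
adjacency matrix is the kernel of the Laplacian, whose dimension is the number of connected
components; for a bipartite graph, multiplying by the `±1` sign vector of the bipartition
exchanges the `μ`- and `-μ`-eigenspaces. So both multiplicities are `1` once `W_m(q)` is connected.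

For connectedness, note that every vertex reaches a point `(0, t)`. Going from `(0, t)` along the
line with first coordinate `c`, the point on it with first coordinate `b`, the line through that
point with first coordinate `0` and its point with first coordinate `0`, one arrives at
`(0, t + c (b, b², …, bᵐ))`. Since `m ≤ q - 1`, there are `m` distinct nonzero `b`, whose
Vandermonde matrix is invertible, so these shifts generate all of `Fᵐ`.
-/

open Matrix

namespace SimpleGraph

variable {V : Type*} [Fintype V] [DecidableEq V] {G : SimpleGraph V}

def Coloring.sign (C : G.Coloring (Fin 2)) : Matrix V V ℝ :=
  diagonal fun v => (-1) ^ (C v : ℕ)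

theorem Coloring.sign_mul_sign (C : G.Coloring (Fin 2)) : C.sign * C.sign = 1 := by
  simp [Coloring.sign, ← pow_add, ← two_mul, pow_mul]

variable [DecidableRel G.Adj]

theorem IsRegularOfDegree.eigenspace_adjMatrix_eq_ker_lapMatrix {d : ℕ}
    (hG : G.IsRegularOfDegree d) :
    Module.End.eigenspace (G.adjMatrix ℝ).mulVecLin d = LinearMap.ker (G.lapMatrix ℝ).toLin' := by
  ext x
  have hdeg : G.degMatrix ℝ *ᵥ x = (d : ℝ) • x := by
    ext v
    simp [degMatrix_mulVec_apply, hG.degree_eq]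
  rw [Module.End.mem_eigenspace_iff, LinearMap.mem_ker, toLin'_apply, lapMatrix, sub_mulVec, hdeg,
    mulVecLin_apply, sub_eq_zero, eq_comm]

theorem IsRegularOfDegree.finrank_eigenspace_adjMatrix_eq_one {d : ℕ}
    (hG : G.IsRegularOfDegree d) (hc : G.Connected) :
    Module.finrank ℝ (Module.End.eigenspace (G.adjMatrix ℝ).mulVecLin d) = 1 := by
  have := hc.preconnected.subsingleton_connectedComponent
  have := hc.nonempty
  rw [hG.eigenspace_adjMatrix_eq_ker_lapMatrix,
    ← card_connectedComponent_eq_finrank_ker_toLin'_lapMatrix]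
  exact (Fintype.card_le_one_iff_subsingleton.2 ‹_›).antisymm Fintype.card_pos

theorem Coloring.adjMatrix_mul_sign (C : G.Coloring (Fin 2)) :
    G.adjMatrix ℝ * C.sign = -(C.sign * G.adjMatrix ℝ) := by
  ext u v
  rw [neg_apply]
  simp only [Coloring.sign, mul_diagonal, diagonal_mul, adjMatrix_apply]
  by_cases huv : G.Adj u v
  · have := C.valid huv
    rcases Fin.exists_fin_two.1 ⟨C u, rfl⟩ with h | h <;>
      rcases Fin.exists_fin_two.1 ⟨C v, rfl⟩ with h' | h' <;> simp_all
  · simp [huv]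

theorem IsBipartite.finrank_eigenspace_adjMatrix_neg_le (hG : G.IsBipartite) (μ : ℝ) :
    Module.finrank ℝ (Module.End.eigenspace (G.adjMatrix ℝ).mulVecLin (-μ))
      ≤ Module.finrank ℝ (Module.End.eigenspace (G.adjMatrix ℝ).mulVecLin μ) := by
  obtain ⟨C⟩ := hG
  have hinv : ∀ g, C.sign *ᵥ C.sign *ᵥ g = g := fun g => by
    rw [mulVec_mulVec, C.sign_mul_sign, one_mulVec]
  refine LinearMap.finrank_le_finrank_of_injective
    (f := C.sign.mulVecLin.restrict fun g hg => ?_) fun g h hgh => ?_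
  · rw [Module.End.mem_eigenspace_iff, mulVecLin_apply] at hg ⊢
    rw [mulVecLin_apply, mulVec_mulVec, C.adjMatrix_mul_sign, neg_mulVec, ← mulVec_mulVec, hg,
      mulVec_smul, neg_smul, neg_neg]
  · simpa [hinv] using congrArg (C.sign *ᵥ ·) (congrArg Subtype.val hgh)

theorem IsBipartite.finrank_eigenspace_adjMatrix_neg (hG : G.IsBipartite) (μ : ℝ) :
    Module.finrank ℝ (Module.End.eigenspace (G.adjMatrix ℝ).mulVecLin (-μ))
      = Module.finrank ℝ (Module.End.eigenspace (G.adjMatrix ℝ).mulVecLin μ) := by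
  refine (hG.finrank_eigenspace_adjMatrix_neg_le μ).antisymm ?_
  have h := hG.finrank_eigenspace_adjMatrix_neg_le (-μ)
  rwa [neg_neg] at h

end SimpleGraph

open Sum

namespace WengerGraph

variable {F : Type*} [Field F] {m : ℕ}

def lineThrough (p : Fin (m + 1) → F) (a : F) : Fin (m + 1) → F :=
  fun i => Fin.induction a (fun j lj => lj * p 0 - p j.succ) i

def pointOn (l : Fin (m + 1) → F) (b : F) : Fin (m + 1) → F :=
  Fin.cons b fun j => l j.castSucc * b - l j.succ

@[simp] lemma lineThrough_zero (p : Fin (m + 1) → F) (a : F) : lineThrough p a 0 = a := rfl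

@[simp] lemma lineThrough_succ (p : Fin (m + 1) → F) (a : F) (j : Fin m) :
    lineThrough p a j.succ = lineThrough p a j.castSucc * p 0 - p j.succ := by
  simp [lineThrough]

@[simp] lemma pointOn_zero (l : Fin (m + 1) → F) (b : F) : pointOn l b 0 = b := rfl

@[simp] lemma pointOn_succ (l : Fin (m + 1) → F) (b : F) (j : Fin m) :
    pointOn l b j.succ = l j.castSucc * b - l j.succ := rfl

lemma wengerAdj_lineThrough (p : Fin (m + 1) → F) (a : F) : wengerAdj p (lineThrough p a) := by
  intro i; rw [lineThrough_succ]; ring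

lemma wengerAdj_pointOn (l : Fin (m + 1) → F) (b : F) : wengerAdj (pointOn l b) l := by
  intro i; rw [pointOn_succ, pointOn_zero]; ring

lemma wengerAdj_iff_eq_lineThrough {p l : Fin (m + 1) → F} :
    wengerAdj p l ↔ l = lineThrough p (l 0) := by
  refine ⟨fun h => funext fun i => ?_, fun h => h ▸ wengerAdj_lineThrough p _⟩
  induction i using Fin.induction with
  | zero => rfl
  | succ j ih => rw [lineThrough_succ, ← ih]; linear_combination h j

lemma wengerAdj_iff_eq_pointOn {p l : Fin (m + 1) → F} :
    wengerAdj p l ↔ p = pointOn l (p 0) := by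
  refine ⟨fun h => funext fun i => ?_, fun h => h ▸ wengerAdj_pointOn l _⟩
  cases i using Fin.cases with
  | zero => rfl
  | succ j => rw [pointOn_succ]; linear_combination h j

lemma adj_inl_inr {p l : Fin (m + 1) → F} :
    (WengerGraph F m).Adj (inl p) (inr l) ↔ wengerAdj p l := Iff.rfl

lemma isBipartite : (WengerGraph F m).IsBipartite :=
  ⟨SimpleGraph.Coloring.mk (fun v => if v.isLeft then 0 else 1) <| by
    rintro (p | l) (p' | l') h <;> simp_all [WengerGraph]⟩

lemma reachable_pointOn_pointOn (l : Fin (m + 1) → F) (b b' : F) :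
    (WengerGraph F m).Reachable (inl (pointOn l b)) (inl (pointOn l b')) :=
  (adj_inl_inr.2 (wengerAdj_pointOn l b)).reachable.trans
    (adj_inl_inr.2 (wengerAdj_pointOn l b')).reachable.symm

lemma reachable_lineThrough_pointOn (p : Fin (m + 1) → F) (a b : F) :
    (WengerGraph F m).Reachable (inl p) (inl (pointOn (lineThrough p a) b)) := by
  simpa [← wengerAdj_iff_eq_pointOn.1 (wengerAdj_lineThrough p a)] using
    reachable_pointOn_pointOn (lineThrough p a) (p 0) b

lemma reachable_cons_zero_add_smul_pow (t : Fin m → F) (c b : F) :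
    (WengerGraph F m).Reachable (inl (Fin.cons 0 t))
      (inl (Fin.cons 0 (t + c • fun j : Fin m => b ^ ((j : ℕ) + 1)))) := by
  set l := lineThrough (Fin.cons 0 t) c
  set p := pointOn l b
  have hl : ∀ i : Fin (m + 1), lineThrough p 0 i = l i - c * b ^ (i : ℕ) := by
    intro i
    induction i using Fin.induction with
    | zero => simp [l]
    | succ j ih =>
      rw [lineThrough_succ, ih]
      simp only [p, l, pointOn_zero, pointOn_succ, lineThrough_succ, Fin.val_succ, Fin.val_castSucc]
      ring
  have htarget :
      pointOn (lineThrough p 0) 0 = Fin.cons 0 (t + c • fun j : Fin m => b ^ ((j : ℕ) + 1)) := by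
    funext i
    cases i using Fin.cases with
    | zero => rfl
    | succ j =>
      simp only [pointOn_succ, hl, l, lineThrough_succ, Fin.cons_zero, Fin.cons_succ,
        Fin.val_castSucc, Fin.val_succ, Pi.add_apply, Pi.smul_apply, smul_eq_mul]
      ring
  rw [← htarget]
  exact (reachable_lineThrough_pointOn _ c b).trans (reachable_lineThrough_pointOn p 0 0)

variable (F m) in
def reachableShifts : AddSubmonoid (Fin m → F) where
  carrier := {v | ∀ t, (WengerGraph F m).Reachable (inl (Fin.cons 0 t)) (inl (Fin.cons 0 (t + v)))}
  zero_mem' t := by simp only [add_zero]; rfl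
  add_mem' {v w} hv hw t := (hv t).trans (by simpa only [add_assoc] using hw (t + v))

lemma smul_pow_mem_reachableShifts (c : F) {b : F} (hb : b ≠ 0) :
    (c • fun j : Fin m => b ^ (j : ℕ)) ∈ reachableShifts F m := by
  intro t
  convert reachable_cons_zero_add_smul_pow t (c / b) b using 4
  funext j
  simp only [Pi.smul_apply, smul_eq_mul, pow_succ]
  field_simp

lemma reachableShifts_eq_top [Fintype F] (hm : m ≤ Fintype.card F - 1) :
    reachableShifts F m = ⊤ := by
  classical
  obtain ⟨e⟩ : Nonempty (Fin m ↪ Fˣ) :=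
    Function.Embedding.nonempty_of_card_le (by simpa [Fintype.card_units])
  have hV : IsUnit (vandermonde fun k => (e k : F)) := by
    rw [isUnit_iff_isUnit_det, isUnit_iff_ne_zero, det_vandermonde_ne_zero_iff]
    exact fun j k h => e.injective (Units.ext h)
  refine eq_top_iff.2 fun v _ => ?_
  obtain ⟨c, rfl⟩ := vecMul_surjective_iff_isUnit.2 hV v
  dsimp only
  rw [vecMul_eq_sum]
  exact sum_mem fun k _ => smul_pow_mem_reachableShifts (c k) (e k).ne_zero

lemma exists_reachable_cons_zero (v : (Fin (m + 1) → F) ⊕ (Fin (m + 1) → F)) :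
    ∃ t, (WengerGraph F m).Reachable v (inl (Fin.cons 0 t)) := by
  rcases v with p | l
  · exact ⟨_, reachable_lineThrough_pointOn p 0 0⟩
  · exact ⟨_, (adj_inl_inr.2 (wengerAdj_pointOn l 0)).reachable.symm⟩

lemma connected [Fintype F] (hm : m ≤ Fintype.card F - 1) :
    (WengerGraph F m).Connected := by
  refine SimpleGraph.connected_iff_exists_forall_reachable _ |>.2 ⟨inl (Fin.cons 0 0), fun v => ?_⟩
  obtain ⟨t, ht⟩ := exists_reachable_cons_zero v
  have ht_shift : t ∈ reachableShifts F m := reachableShifts_eq_top hm ▸ AddSubmonoid.mem_top t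
  have h0t := ht_shift 0
  rw [zero_add] at h0t
  exact h0t.trans ht.symm

variable [Fintype F] [DecidableRel (WengerGraph F m).Adj]

lemma degree_inl (p : Fin (m + 1) → F) :
    (WengerGraph F m).degree (inl p) = Fintype.card F := by
  rw [← SimpleGraph.card_neighborFinset_eq_degree, ← Finset.card_univ]
  refine (Finset.card_nbij' (inr ∘ lineThrough p) (Sum.elim 0 (· 0)) ?_ ?_ ?_ ?_).symm
  · exact fun a _ => (SimpleGraph.mem_neighborFinset _ _ _).2 (wengerAdj_lineThrough p a)
  · simp
  · exact fun a _ => rfl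
  · rintro (p' | l) h <;> rw [Finset.mem_coe, SimpleGraph.mem_neighborFinset] at h
    · exact h.elim
    · exact congrArg inr (wengerAdj_iff_eq_lineThrough.1 h).symm

lemma degree_inr (l : Fin (m + 1) → F) :
    (WengerGraph F m).degree (inr l) = Fintype.card F := by
  rw [← SimpleGraph.card_neighborFinset_eq_degree, ← Finset.card_univ]
  refine (Finset.card_nbij' (inl ∘ pointOn l) (Sum.elim (· 0) 0) ?_ ?_ ?_ ?_).symm
  · exact fun b _ => (SimpleGraph.mem_neighborFinset _ _ _).2 (wengerAdj_pointOn l b)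
  · simp
  · exact fun b _ => rfl
  · rintro (p | l') h <;> rw [Finset.mem_coe, SimpleGraph.mem_neighborFinset] at h
    · exact congrArg inl (wengerAdj_iff_eq_pointOn.1 h).symm
    · exact h.elim

lemma isRegularOfDegree : (WengerGraph F m).IsRegularOfDegree (Fintype.card F) := by
  rintro (p | l)
  exacts [degree_inl p, degree_inr l]

end WengerGraph

theorem wenger_extreme_eigenvalue_multiplicity_general (q m : ℕ) (F : Type) [Field F] [Fintype F]
    (hq : Fintype.card F = q) (hm2 : m ≤ q - 1) :
    Module.finrank ℝ
        (Module.End.eigenspace ((wengerAdjMatrix F m).mulVecLin) (q : ℝ)) = 1 ∧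
    Module.finrank ℝ
        (Module.End.eigenspace ((wengerAdjMatrix F m).mulVecLin) (-(q : ℝ))) = 1 := by
  classical
  subst hq
  have hpos := WengerGraph.isRegularOfDegree.finrank_eigenspace_adjMatrix_eq_one
    (WengerGraph.connected hm2)
  exact ⟨hpos, (WengerGraph.isBipartite.finrank_eigenspace_adjMatrix_neg _).trans hpos⟩

/-- For a prime power `q` and `1 ≤ m ≤ q − 1`, the eigenvalues `q` and
`−q` of the adjacency matrix of `W_m(q)` each have multiplicity exactly `1`. -/
theorem wenger_extreme_eigenvalue_multiplicity (q m : ℕ) (F : Type) [Field F] [Fintype F]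
    (hq : Fintype.card F = q) (hm1 : 1 ≤ m) (hm2 : m ≤ q - 1) :
    Module.finrank ℝ
        (Module.End.eigenspace ((wengerAdjMatrix F m).mulVecLin) (q : ℝ)) = 1 ∧
    Module.finrank ℝ
        (Module.End.eigenspace ((wengerAdjMatrix F m).mulVecLin) (-(q : ℝ))) = 1 :=
  wenger_extreme_eigenvalue_multiplicity_general q m F hq hm2
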